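/- Let e_1,…,e_p ∈ ℂᵐ and f_1,…,f_p ∈ ℂⁿ be unit vectors with f_1,…,f_p linearly independent and the lines ℂe_1,…,ℂe_p pairwise distinct. Then the face of S generated by {ω_{e_i⊗f_i} : 1 ≤ i ≤ p} equals the convex hull of {ω_{e_i⊗f_i} : 1 ≤ i ≤ p}, and this face is a simplex. -/

import Mathlib

open scoped Kronecker ComplexOrder

noncomputable section

/-- The vector state (rank-one projection onto `ℂx`) associated to a unit vector `x`. -/
def vecState {ι : Type*} [Fintype ι] (x : EuclideanSpace ℂ ι) : Matrix ι ι ℂ :=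
  Matrix.of fun i j => x i * (starRingEnd ℂ) (x j)

/-- The (Kronecker) tensor product of two vectors. -/
def tensorVec {m n : ℕ} (x : EuclideanSpace ℂ (Fin m)) (y : EuclideanSpace ℂ (Fin n)) :
    EuclideanSpace ℂ (Fin m × Fin n) :=
  WithLp.toLp 2 (fun p => x p.1 * y p.2)

/-- The state space of `B(ℂ^ι)`: density matrices. -/
def stateSet (ι : Type*) [Fintype ι] [DecidableEq ι] : Set (Matrix ι ι ℂ) :=
  {ρ | ρ.PosSemidef ∧ ρ.trace = 1}

/-- The set of separable states on `B(ℂᵐ ⊗ ℂⁿ)`: convex combinations of pure product states. -/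
def sepSet (m n : ℕ) : Set (Matrix (Fin m × Fin n) (Fin m × Fin n) ℂ) :=
  {ρ | ∃ (r : ℕ) (lam : Fin r → ℝ) (x : Fin r → EuclideanSpace ℂ (Fin m))
        (y : Fin r → EuclideanSpace ℂ (Fin n)),
      (∀ i, 0 ≤ lam i) ∧ (∑ i, lam i) = 1 ∧ (∀ i, ‖x i‖ = 1) ∧ (∀ i, ‖y i‖ = 1) ∧
      ρ = ∑ i, lam i • vecState (tensorVec (x i) (y i))}

/-- `F` is a face of the convex set `C`. -/
def IsFace {E : Type*} [AddCommGroup E] [Module ℝ E] (C F : Set E) : Prop :=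
  F ⊆ C ∧ Convex ℝ F ∧
    ∀ ⦃x⦄, x ∈ C → ∀ ⦃y⦄, y ∈ C → ∀ ⦃z⦄, z ∈ openSegment ℝ x y → z ∈ F → x ∈ F ∧ y ∈ F

/-- The smallest face of `C` containing `X`. -/
def faceGen {E : Type*} [AddCommGroup E] [Module ℝ E] (C X : Set E) : Set E :=
  ⋂₀ {F | IsFace C F ∧ X ⊆ F}

/-- `C` is the direct convex sum of the convex sets `F 1, …, F q`. -/
def IsDirectConvexSum {E : Type*} [AddCommGroup E] [Module ℝ E] {q : ℕ}
    (C : Set E) (F : Fin q → Set E) : Prop :=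
  (∀ x ∈ C, ∃ (lam : Fin q → ℝ) (pt : Fin q → E),
      (∀ i, 0 ≤ lam i) ∧ (∑ i, lam i) = 1 ∧ (∀ i, lam i ≠ 0 → pt i ∈ F i) ∧
      x = ∑ i, lam i • pt i) ∧
  (∀ (lam lam' : Fin q → ℝ) (pt pt' : Fin q → E),
      (∀ i, 0 ≤ lam i) → (∑ i, lam i) = 1 → (∀ i, lam i ≠ 0 → pt i ∈ F i) →
      (∀ i, 0 ≤ lam' i) → (∑ i, lam' i) = 1 → (∀ i, lam' i ≠ 0 → pt' i ∈ F i) →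
      (∑ i, lam i • pt i) = (∑ i, lam' i • pt' i) →
      ∀ i, lam i = lam' i ∧ (lam i ≠ 0 → pt i = pt' i))

/-- A (finite-dimensional) convex set is a simplex: every point has a unique
representation as a convex combination of its extreme points. -/
def IsSimplex {E : Type*} [AddCommGroup E] [Module ℝ E] (C : Set E) : Prop :=
  ∀ x ∈ C, ∃! w : E →₀ ℝ,
    ↑w.support ⊆ Set.extremePoints ℝ C ∧ (∀ y, 0 ≤ w y) ∧
    (w.sum fun _ a => a) = 1 ∧ (w.sum fun y a => a • y) = x

/-- Two convex sets (possibly in different ambient spaces) are affinely isomorphic. -/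
def AffIsomorphic {E F' : Type*} [AddCommGroup E] [Module ℝ E] [AddCommGroup F'] [Module ℝ F']
    (A : Set E) (B : Set F') : Prop :=
  ∃ φ : E → F', Set.BijOn φ A B ∧
    ∀ x ∈ A, ∀ y ∈ A, ∀ t : ℝ, 0 ≤ t → t ≤ 1 →
      φ (t • x + (1 - t) • y) = t • φ x + (1 - t) • φ y

/-!
If `∑ₖ μₖ ω_{uₖ} = ∑ᵢ λᵢ ω_{eᵢ⊗fᵢ}` with `μ ≥ 0`, comparing the quadratic forms of both sides on
the orthogonal complement of the `eᵢ⊗fᵢ` shows that every `uₖ` with `μₖ ≠ 0` lies in their span.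
A product vector `x⊗y = ∑ᵢ cᵢ eᵢ⊗fᵢ` is a multiple of a single `eᵢ⊗fᵢ`: reading off the
coefficients of the rows in the independent family `fᵢ` gives `cᵢ eᵢ ∈ ℂx`, and the lines `ℂeᵢ` are
distinct. So when a point of the convex hull of the `ω_{eᵢ⊗fᵢ}` is a proper convex combination
of two separable states, both lie in the hull, i.e. the hull is a face of `S`; it is a simplex
because the `ω_{eᵢ⊗fᵢ}` are linearly independent, as the `eᵢ⊗fᵢ` are.
-/

section Convex

variable {E : Type*} [AddCommGroup E] [Module ℝ E]

theorem faceGen_eq_convexHull_of_isFace {C X : Set E} (h : IsFace C (convexHull ℝ X)) :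
    faceGen C X = convexHull ℝ X :=
  (Set.sInter_subset_of_mem (show convexHull ℝ X ∈ {F | IsFace C F ∧ X ⊆ F} from
    ⟨h, subset_convexHull ℝ X⟩)).antisymm
    (Set.subset_sInter fun _ hF => convexHull_min hF.2 hF.1.2.1)

theorem sum_smul_mem_convexHull {ι : Type*} [Fintype ι] {s : Set E} {w : ι → ℝ} {z : ι → E}
    (hw₀ : ∀ i, 0 ≤ w i) (hw₁ : ∑ i, w i = 1) (hz : ∀ i, w i ≠ 0 → z i ∈ s) :
    ∑ i, w i • z i ∈ convexHull ℝ s := by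
  classical
  have hsupp : ∀ i ∈ Finset.univ, i ∉ Finset.univ.filter (w · ≠ 0) → w i = 0 := by
    simp
  rw [← Finset.sum_subset (Finset.filter_subset _ _) fun i hi h => by rw [hsupp i hi h, zero_smul]]
  rw [← Finset.sum_subset (Finset.filter_subset _ _) hsupp] at hw₁
  exact (convex_convexHull ℝ s).sum_mem (fun i _ => hw₀ i) hw₁
    fun i hi => subset_convexHull ℝ s (hz i (Finset.mem_filter.1 hi).2)

theorem isFace_convexHull_of_forall_mem {P X : Set E} (hXP : X ⊆ P)
    (h : ∀ (κ : Type) [Fintype κ] (μ : κ → ℝ) (z : κ → E), (∀ k, 0 ≤ μ k) → (∀ k, z k ∈ P) →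
      ∑ k, μ k • z k ∈ convexHull ℝ X → ∀ k, μ k ≠ 0 → z k ∈ X) :
    IsFace (convexHull ℝ P) (convexHull ℝ X) := by
  refine ⟨convexHull_mono hXP, convex_convexHull ℝ X, ?_⟩
  rintro _ h₁ _ h₂ z ⟨t₁, t₂, ht₁, ht₂, -, rfl⟩ hzX
  obtain ⟨ι₁, _, w₁, z₁, hw₁, hw₁₁, hz₁, rfl⟩ := mem_convexHull_iff_exists_fintype.1 h₁
  obtain ⟨ι₂, _, w₂, z₂, hw₂, hw₂₁, hz₂, rfl⟩ := mem_convexHull_iff_exists_fintype.1 h₂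
  have hmerged := h (ι₁ ⊕ ι₂) (Sum.elim (t₁ • w₁) (t₂ • w₂)) (Sum.elim z₁ z₂)
    (by rintro (k | k); exacts [mul_nonneg ht₁.le (hw₁ k), mul_nonneg ht₂.le (hw₂ k)])
    (by rintro (k | k) <;> simp [hz₁, hz₂])
    (by simpa [Fintype.sum_sum_type, Finset.smul_sum, mul_smul] using hzX)
  exact ⟨sum_smul_mem_convexHull hw₁ hw₁₁ fun k hk => hmerged (.inl k) (by simp [ht₁.ne', hk]),
    sum_smul_mem_convexHull hw₂ hw₂₁ fun k hk => hmerged (.inr k) (by simp [ht₂.ne', hk])⟩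

end Convex

section Simplex

variable {E : Type*} [AddCommGroup E] {s : Finset E}

theorem AffineIndependent.eqOn_of_sum_smul_eq {k : Type*} [Ring k] [Module k E]
    (hs : AffineIndependent k ((↑) : s → E))
    {w w' : E → k} (hw : ∑ y ∈ s, w y = 1) (hw' : ∑ y ∈ s, w' y = 1)
    (h : ∑ y ∈ s, w y • y = ∑ y ∈ s, w' y • y) : ∀ y ∈ s, w y = w' y := by
  intro y hy
  refine sub_eq_zero.1 (hs.eq_zero_of_sum_eq_zero_subtype (w := w - w') ?_ ?_ y hy)
  · simp [Finset.sum_sub_distrib, hw, hw']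
  · simp [sub_smul, Finset.sum_sub_distrib, h]

variable {𝕜 : Type*} [Field 𝕜] [LinearOrder 𝕜] [IsStrictOrderedRing 𝕜] [Module 𝕜 E]

theorem AffineIndependent.eq_of_smul_add_smul_eq (hs : AffineIndependent 𝕜 ((↑) : s → E))
    {a b y : E} (ha : a ∈ convexHull 𝕜 (s : Set E)) (hb : b ∈ convexHull 𝕜 (s : Set E))
    (hy : y ∈ s) {t u : 𝕜} (ht : 0 < t) (hu : 0 ≤ u) (htu : t + u = 1)
    (h : t • a + u • b = y) : a = y := by
  classical
  obtain ⟨α, hα₀, hα₁, rfl⟩ := Finset.mem_convexHull'.1 ha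
  obtain ⟨β, hβ₀, hβ₁, rfl⟩ := Finset.mem_convexHull'.1 hb
  have hcoord := hs.eqOn_of_sum_smul_eq (w := t • α + u • β)
    (w' := fun z => if z = y then 1 else 0)
    (by simp [Finset.sum_add_distrib, ← Finset.mul_sum, hα₁, hβ₁, htu])
    (by simp [hy])
    (by simp [add_smul, Finset.sum_add_distrib, mul_smul, ← Finset.smul_sum, h, hy])
  have hα : ∀ z ∈ s, z ≠ y → α z = 0 := by
    intro z hz hne
    have hsum := hcoord z hz
    simp only [Pi.add_apply, Pi.smul_apply, smul_eq_mul, if_neg hne] at hsum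
    have htα := ((add_eq_zero_iff_of_nonneg (mul_nonneg ht.le (hα₀ z hz))
      (mul_nonneg hu (hβ₀ z hz))).1 hsum).1
    exact (mul_eq_zero.1 htα).resolve_left ht.ne'
  have hαy : α y = 1 := by
    rw [← hα₁, Finset.sum_eq_single_of_mem y hy hα]
  rw [Finset.sum_eq_single_of_mem y hy fun z hz hne => by rw [hα z hz hne, zero_smul], hαy,
    one_smul]

theorem AffineIndependent.extremePoints_convexHull (hs : AffineIndependent 𝕜 ((↑) : s → E)) :
    (convexHull 𝕜 (s : Set E)).extremePoints 𝕜 = s := by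
  refine extremePoints_convexHull_subset.antisymm fun y hy => ?_
  refine mem_extremePoints.2 ⟨subset_convexHull 𝕜 _ hy, fun a ha b hb ⟨t, u, ht, hu, htu, h⟩ => ?_⟩
  exact ⟨hs.eq_of_smul_add_smul_eq ha hb hy ht hu.le htu h,
    hs.eq_of_smul_add_smul_eq hb ha hy hu ht.le (by rw [add_comm, htu]) (by rw [add_comm, h])⟩

theorem AffineIndependent.isSimplex_convexHull [Module ℝ E]
    (hs : AffineIndependent ℝ ((↑) : s → E)) :
    IsSimplex (convexHull ℝ (s : Set E)) := by
  classical
  intro x hx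
  obtain ⟨w, hw₀, hw₁, rfl⟩ := Finset.mem_convexHull'.1 hx
  rw [hs.extremePoints_convexHull]
  let w₀ : E →₀ ℝ := Finsupp.onFinset s (fun y => if y ∈ s then w y else 0) fun y hy => by
    by_contra h; exact hy (if_neg h)
  have hw₀s : ∀ y ∈ s, w₀ y = w y := fun y hy => if_pos hy
  have hmass {v : E →₀ ℝ} (hv : ↑v.support ⊆ (s : Set E)) :
      (v.sum fun _ a => a) = ∑ y ∈ s, v y :=
    Finsupp.sum_of_support_subset v hv _ fun _ _ => rfl
  have hbary {v : E →₀ ℝ} (hv : ↑v.support ⊆ (s : Set E)) :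
      (v.sum fun y a => a • y) = ∑ y ∈ s, v y • y :=
    Finsupp.sum_of_support_subset v hv _ fun _ _ => zero_smul ℝ _
  have hw₀supp : ↑w₀.support ⊆ (s : Set E) := Finsupp.support_onFinset_subset
  refine ⟨w₀, ⟨hw₀supp, fun y => ?_, ?_, ?_⟩, fun v ⟨hv, _, hv₁, hvx⟩ => Finsupp.ext fun y => ?_⟩
  · change 0 ≤ if y ∈ s then w y else 0
    split_ifs with hy
    exacts [hw₀ y hy, le_rfl]
  · rw [hmass hw₀supp, ← hw₁]; exact Finset.sum_congr rfl hw₀s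
  · rw [hbary hw₀supp]; exact Finset.sum_congr rfl fun y hy => by rw [hw₀s y hy]
  · by_cases hy : y ∈ s
    · rw [hw₀s y hy]
      refine hs.eqOn_of_sum_smul_eq (hmass hv ▸ hv₁) hw₁ ?_ y hy
      rw [← hbary hv, hvx]
    · rw [Finsupp.notMem_support_iff.1 fun h => hy (hv h),
        Finsupp.notMem_support_iff.1 fun h => hy (hw₀supp h)]

end Simplex

section VectorStates

variable {ι : Type*} [Fintype ι]

theorem vecState_smul_of_norm_eq_one {c : ℂ} (hc : ‖c‖ = 1) (x : EuclideanSpace ℂ ι) :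
    vecState (c • x) = vecState x := by
  have hc' : c * starRingEnd ℂ c = 1 := by
    rw [Complex.mul_conj, Complex.normSq_eq_norm_sq, hc]; norm_num
  ext i j
  simp only [vecState, Matrix.of_apply, PiLp.smul_apply, smul_eq_mul, map_mul]
  linear_combination (x i * starRingEnd ℂ (x j)) * hc'

theorem toEuclideanLin_vecState [DecidableEq ι] (x w : EuclideanSpace ℂ ι) :
    Matrix.toEuclideanLin (vecState x) w = inner ℂ x w • x := by
  ext i
  simp [vecState, Matrix.mulVec, dotProduct, PiLp.inner_apply, Finset.mul_sum, mul_comm,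
    mul_left_comm]

theorem re_inner_toEuclideanLin_vecState [DecidableEq ι] (x w : EuclideanSpace ℂ ι) :
    (inner ℂ w (Matrix.toEuclideanLin (vecState x) w)).re = ‖inner ℂ x w‖ ^ 2 := by
  rw [toEuclideanLin_vecState, inner_smul_right, ← inner_conj_symm w x, Complex.mul_conj,
    Complex.normSq_eq_norm_sq, Complex.ofReal_re]

theorem linearIndependent_vecState {κ : Type*} {v : κ → EuclideanSpace ℂ ι}
    (hv : LinearIndependent ℂ v) : LinearIndependent ℝ fun i => vecState (v i) := by
  classical
  refine .restrict_scalars' ℝ (K := ℂ) (linearIndependent_iff'.2 fun s g hg i hi => ?_)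
  have hrow : ∑ k ∈ s, (g k * inner ℂ (v k) (v i)) • v k = 0 := by
    simpa [map_sum, toEuclideanLin_vecState, mul_smul] using
      congrArg (fun A => Matrix.toEuclideanLin A (v i)) hg
  have := linearIndependent_iff'.1 hv s _ hrow i hi
  exact (mul_eq_zero.1 this).resolve_right (inner_self_ne_zero.2 (hv.ne_zero i))

theorem mem_span_of_sum_smul_vecState_eq {κ ι' : Type*} [Fintype κ] [Fintype ι']
    {μ : κ → ℝ} (hμ : ∀ k, 0 ≤ μ k) {u : κ → EuclideanSpace ℂ ι}
    {lam : ι' → ℝ} {v : ι' → EuclideanSpace ℂ ι}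
    (h : ∑ k, μ k • vecState (u k) = ∑ i, lam i • vecState (v i)) {k : κ} (hk : μ k ≠ 0) :
    u k ∈ Submodule.span ℂ (Set.range v) := by
  classical
  rw [← Submodule.orthogonal_orthogonal (Submodule.span ℂ (Set.range v)),
    Submodule.mem_orthogonal]
  intro w hw
  have hvw : ∀ i, inner ℂ (v i) w = 0 := fun i =>
    (Submodule.mem_orthogonal _ w).1 hw (v i) (Submodule.subset_span ⟨i, rfl⟩)
  have hquad := congrArg (fun A => (inner ℂ w (Matrix.toEuclideanLin A w)).re) h
  simp only [← Complex.coe_smul, map_sum, map_smul, LinearMap.sum_apply, LinearMap.smul_apply,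
    inner_sum, inner_smul_right, Complex.re_sum, Complex.re_ofReal_mul,
    re_inner_toEuclideanLin_vecState, hvw, norm_zero, zero_pow two_ne_zero, mul_zero,
    Finset.sum_const_zero] at hquad
  have hterm := (Finset.sum_eq_zero_iff_of_nonneg fun i _ =>
    mul_nonneg (hμ i) (sq_nonneg _)).1 hquad k (Finset.mem_univ k)
  rw [inner_eq_zero_symm, ← norm_eq_zero, ← sq_eq_zero_iff (M₀ := ℝ)]
  exact (mul_eq_zero.1 hterm).resolve_left hk

end VectorStates

section ProductVectors

variable {m n : ℕ}

def tensorRow (a : Fin m) : EuclideanSpace ℂ (Fin m × Fin n) →ₗ[ℂ] EuclideanSpace ℂ (Fin n) where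
  toFun z := WithLp.toLp 2 fun b => z (a, b)
  map_add' _ _ := rfl
  map_smul' _ _ := rfl

theorem tensorRow_tensorVec (a : Fin m) (x : EuclideanSpace ℂ (Fin m))
    (y : EuclideanSpace ℂ (Fin n)) : tensorRow a (tensorVec x y) = x a • y :=
  rfl

theorem norm_tensorVec (x : EuclideanSpace ℂ (Fin m)) (y : EuclideanSpace ℂ (Fin n)) :
    ‖tensorVec x y‖ = ‖x‖ * ‖y‖ := by
  rw [EuclideanSpace.norm_eq, EuclideanSpace.norm_eq x, EuclideanSpace.norm_eq y,
    ← Real.sqrt_mul (by positivity), Finset.sum_mul_sum, Fintype.sum_prod_type]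
  simp [tensorVec, mul_pow]

variable {p : ℕ} {e : Fin p → EuclideanSpace ℂ (Fin m)} {f : Fin p → EuclideanSpace ℂ (Fin n)}

theorem tensorRow_sum_smul_tensorVec (a : Fin m) (c : Fin p → ℂ) :
    tensorRow a (∑ i, c i • tensorVec (e i) (f i)) = ∑ i, (c i * e i a) • f i := by
  simp [map_sum, tensorRow_tensorVec, smul_smul]

theorem linearIndependent_tensorVec (he : ∀ i, e i ≠ 0) (hf : LinearIndependent ℂ f) :
    LinearIndependent ℂ fun i => tensorVec (e i) (f i) := by
  refine Fintype.linearIndependent_iff.2 fun c hc i => ?_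
  obtain ⟨a, ha⟩ : ∃ a, e i a ≠ 0 := by
    by_contra! h
    exact he i (PiLp.ext h)
  have hrow := Fintype.linearIndependent_iff.1 hf _
    (by rw [← tensorRow_sum_smul_tensorVec a c, hc, map_zero]) i
  exact (mul_eq_zero.1 hrow).resolve_right ha

theorem exists_smul_eq_smul_of_tensorVec_eq_sum (hf : LinearIndependent ℂ f) {c : Fin p → ℂ}
    {x : EuclideanSpace ℂ (Fin m)} {y : EuclideanSpace ℂ (Fin n)}
    (h : tensorVec x y = ∑ i, c i • tensorVec (e i) (f i)) :
    ∃ d : Fin p → ℂ, ∀ i, c i • e i = d i • x := by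
  obtain ⟨g, hg⟩ := (Fintype.linearCombination ℂ f).exists_leftInverse_of_injective
    (LinearMap.ker_eq_bot.2 hf.fintypeLinearCombination_injective)
  refine ⟨g y, fun i => PiLp.ext fun a => ?_⟩
  have hrow : x a • y = Fintype.linearCombination ℂ f fun i => c i * e i a := by
    rw [Fintype.linearCombination_apply, ← tensorRow_sum_smul_tensorVec, ← h, tensorRow_tensorVec]
  have hcoeff := congrFun (congrArg g hrow) i
  rw [map_smul, ← LinearMap.comp_apply, hg, LinearMap.id_apply] at hcoeff
  simp only [PiLp.smul_apply, Pi.smul_apply, smul_eq_mul] at hcoeff ⊢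
  linear_combination -hcoeff

theorem exists_eq_smul_of_tensorVec_mem_span (he : ∀ i, e i ≠ 0) (hf : LinearIndependent ℂ f)
    (hdist : ∀ i j, i ≠ j → Submodule.span ℂ {e i} ≠ Submodule.span ℂ {e j})
    {x : EuclideanSpace ℂ (Fin m)} {y : EuclideanSpace ℂ (Fin n)}
    (hmem : tensorVec x y ∈ Submodule.span ℂ (Set.range fun i => tensorVec (e i) (f i)))
    (hne : tensorVec x y ≠ 0) :
    ∃ i, ∃ c : ℂ, tensorVec x y = c • tensorVec (e i) (f i) := by
  obtain ⟨c, hc⟩ := (Submodule.mem_span_range_iff_exists_fun ℂ).1 hmem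
  obtain ⟨d, hd⟩ := exists_smul_eq_smul_of_tensorVec_eq_sum hf hc.symm
  obtain ⟨i₀, hi₀⟩ : ∃ i, c i ≠ 0 := by
    by_contra! h
    exact hne (by simp [← hc, h])
  have hspan : ∀ i, c i ≠ 0 → Submodule.span ℂ {e i} = Submodule.span ℂ {x} := by
    intro i hi
    have hdi : d i ≠ 0 := by
      rintro h0
      exact he i (by simpa [h0, hi] using hd i)
    rw [← Submodule.span_singleton_smul_eq (IsUnit.mk0 _ hi), hd i,
      Submodule.span_singleton_smul_eq (IsUnit.mk0 _ hdi)]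
  refine ⟨i₀, c i₀, ?_⟩
  rw [← hc, Finset.sum_eq_single i₀ (fun j _ hj => ?_) (by simp)]
  by_contra hcj
  exact hdist j i₀ hj ((hspan j (left_ne_zero_of_smul hcj)).trans (hspan i₀ hi₀).symm)

end ProductVectors

section Separable

variable {m n : ℕ}

def pureProductStates (m n : ℕ) : Set (Matrix (Fin m × Fin n) (Fin m × Fin n) ℂ) :=
  {ρ | ∃ x y, ‖x‖ = 1 ∧ ‖y‖ = 1 ∧ ρ = vecState (tensorVec x y)}

theorem sepSet_eq_convexHull_pureProductStates :
    sepSet m n = convexHull ℝ (pureProductStates m n) := by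
  ext ρ
  constructor
  · rintro ⟨r, lam, x, y, hlam, hsum, hx, hy, rfl⟩
    exact mem_convexHull_of_exists_fintype lam _ hlam hsum
      (fun i => ⟨x i, y i, hx i, hy i, rfl⟩) rfl
  · intro hρ
    obtain ⟨ι, _, w, z, hw, hw₁, hz, rfl⟩ := mem_convexHull_iff_exists_fintype.1 hρ
    choose x y hx hy hxy using hz
    let σ := (Fintype.equivFin ι).symm
    refine ⟨Fintype.card ι, w ∘ σ, x ∘ σ, y ∘ σ, fun _ => hw _, ?_, fun _ => hx _,
      fun _ => hy _, ?_⟩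
    · rw [← hw₁]
      exact σ.sum_comp w
    · simp_rw [hxy]
      exact (σ.sum_comp fun i => w i • vecState (tensorVec (x i) (y i))).symm

variable {p : ℕ} {e : Fin p → EuclideanSpace ℂ (Fin m)} {f : Fin p → EuclideanSpace ℂ (Fin n)}

theorem exists_vecState_eq_of_tensorVec_mem_span (he : ∀ i, ‖e i‖ = 1) (hf1 : ∀ i, ‖f i‖ = 1)
    (hf : LinearIndependent ℂ f)
    (hdist : ∀ i j, i ≠ j → Submodule.span ℂ {e i} ≠ Submodule.span ℂ {e j})
    {x : EuclideanSpace ℂ (Fin m)} {y : EuclideanSpace ℂ (Fin n)} (hx : ‖x‖ = 1) (hy : ‖y‖ = 1)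
    (hmem : tensorVec x y ∈ Submodule.span ℂ (Set.range fun i => tensorVec (e i) (f i))) :
    ∃ i, vecState (tensorVec x y) = vecState (tensorVec (e i) (f i)) := by
  obtain ⟨i, c, hc⟩ := exists_eq_smul_of_tensorVec_mem_span
    (fun i => norm_ne_zero_iff.1 (by simp [he i])) hf hdist hmem
    (norm_ne_zero_iff.1 (by simp [norm_tensorVec, hx, hy]))
  have hc1 : ‖c‖ = 1 := by
    simpa [norm_smul, norm_tensorVec, hx, hy, he, hf1] using (congrArg norm hc).symm
  exact ⟨i, by rw [hc, vecState_smul_of_norm_eq_one hc1]⟩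

theorem isFace_convexHull_vecState_tensorVec (he : ∀ i, ‖e i‖ = 1) (hf1 : ∀ i, ‖f i‖ = 1)
    (hf : LinearIndependent ℂ f)
    (hdist : ∀ i j, i ≠ j → Submodule.span ℂ {e i} ≠ Submodule.span ℂ {e j}) :
    IsFace (sepSet m n) (convexHull ℝ {ρ | ∃ i, ρ = vecState (tensorVec (e i) (f i))}) := by
  rw [sepSet_eq_convexHull_pureProductStates]
  refine isFace_convexHull_of_forall_mem (fun _ ⟨i, hi⟩ => ⟨e i, f i, he i, hf1 i, hi⟩) ?_
  intro κ _ μ z hμ hz hzX k hk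
  obtain ⟨ι, _, w, ρ, -, -, hρ, hsum⟩ := mem_convexHull_iff_exists_fintype.1 hzX
  choose i hi using hρ
  choose x y hx hy hxy using hz
  simp only [hi, hxy] at hsum ⊢
  have hmem := mem_span_of_sum_smul_vecState_eq hμ hsum.symm hk
  exact exists_vecState_eq_of_tensorVec_mem_span he hf1 hf hdist (hx k) (hy k)
    (Submodule.span_mono (Set.range_comp_subset_range i _) hmem)

end Separable

/-- With the `fᵢ` linearly independent and the lines `ℂeᵢ` pairwise distinct, the face of
`S` generated by the pure product states `ω_{eᵢ⊗fᵢ}` equals their convex hull, and this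
face is a simplex. -/
theorem face_of_sep_is_simplex {m n p : ℕ}
    (e : Fin p → EuclideanSpace ℂ (Fin m)) (f : Fin p → EuclideanSpace ℂ (Fin n))
    (he : ∀ i, ‖e i‖ = 1) (hf1 : ∀ i, ‖f i‖ = 1) (hf : LinearIndependent ℂ f)
    (hdist : ∀ i j : Fin p, i ≠ j →
      Submodule.span ℂ {e i} ≠ Submodule.span ℂ {e j}) :
    faceGen (sepSet m n) {ρ | ∃ i : Fin p, ρ = vecState (tensorVec (e i) (f i))} =
      convexHull ℝ {ρ | ∃ i : Fin p, ρ = vecState (tensorVec (e i) (f i))} ∧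
    IsSimplex
      (faceGen (sepSet m n) {ρ | ∃ i : Fin p, ρ = vecState (tensorVec (e i) (f i))}) := by
  classical
  rw [faceGen_eq_convexHull_of_isFace (isFace_convexHull_vecState_tensorVec he hf1 hf hdist)]
  refine ⟨rfl, ?_⟩
  have hW : LinearIndependent ℝ fun i => vecState (tensorVec (e i) (f i)) :=
    linearIndependent_vecState
      (linearIndependent_tensorVec (fun i => norm_ne_zero_iff.1 (by simp [he i])) hf)
  have hX : {ρ | ∃ i, ρ = vecState (tensorVec (e i) (f i))} =
      ↑(Finset.univ.image fun i => vecState (tensorVec (e i) (f i))) := by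
    ext
    simp [eq_comm]
  rw [hX]
  apply AffineIndependent.isSimplex_convexHull
  have hrange := hW.affineIndependent.range
  rwa [← Set.image_univ, ← Finset.coe_univ, ← Finset.coe_image] at hrange
end
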